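/- Let 1 ≤ k ≤ 5 and let w_0, …, w_s ∈ H_k be pairwise ω-orthogonal vectors with gcd(w_0,…,w_s) = 1, where s ≤ g − k − 1. Then there exist vectors x_1, …, x_{g−2−s} ∈ H such that x_j = a_j for 1 ≤ j ≤ k−1, x_j ∈ H_{k+1} for k ≤ j ≤ g−2−s, and the combined family (w_0, …, w_s, x_1, …, x_{g−2−s}) is pairwise ω-orthogonal with gcd(w_0,…,w_s,x_1,…,x_{g−2−s}) = 1 (in particular it is a basis of an isotropic direct summand of H of rank g−1, and each x_j is primitive). -/

import Mathlib

namespace Paper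

/-- The standard symplectic form on `R^{2g}` with respect to the basis
`a_1, b_1, …, a_g, b_g` (coordinates `2i, 2i+1` for `a_{i+1}, b_{i+1}`). -/
def symp {R : Type*} [CommRing R] {g : ℕ} (x y : Fin (2 * g) → R) : R :=
  ∑ i : Fin g,
    (x ⟨2 * i.1, by omega⟩ * y ⟨2 * i.1 + 1, by omega⟩ -
      x ⟨2 * i.1 + 1, by omega⟩ * y ⟨2 * i.1, by omega⟩)

theorem symp_add_left {R : Type*} [CommRing R] {g : ℕ} (x y a : Fin (2 * g) → R) :
    symp (x + y) a = symp x a + symp y a := by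
  unfold symp
  rw [← Finset.sum_add_distrib]
  exact Finset.sum_congr rfl fun i _ => by simp only [Pi.add_apply]; ring

theorem symp_smul_left {R : Type*} [CommRing R] {g : ℕ} (c : R) (x a : Fin (2 * g) → R) :
    symp (c • x) a = c * symp x a := by
  unfold symp
  rw [Finset.mul_sum]
  exact Finset.sum_congr rfl fun i _ => by simp only [Pi.smul_apply, smul_eq_mul]; ring

theorem symp_zero_left {R : Type*} [CommRing R] {g : ℕ} (a : Fin (2 * g) → R) :
    symp (0 : Fin (2 * g) → R) a = 0 := by
  unfold symp; simp

/-- The orthogonal complement `A^⊥ = {x | ω(x,a) = 0 for all a ∈ A}`. -/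
def perp {R : Type*} [CommRing R] {g : ℕ} (A : Set (Fin (2 * g) → R)) :
    Submodule R (Fin (2 * g) → R) where
  carrier := {x | ∀ a ∈ A, symp x a = 0}
  add_mem' := by
    intro x y hx hy a ha
    rw [symp_add_left, hx a ha, hy a ha, add_zero]
  zero_mem' := by
    intro a ha
    exact symp_zero_left a
  smul_mem' := by
    intro c x hx a ha
    rw [symp_smul_left, hx a ha, mul_zero]

/-- The submodule of vectors whose first `m` coordinates vanish.
`H_k = coordZero R (2*g) (2*(k-1))`, and `H₂ = coordZero R (2*(g+1)) 2`. -/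
def coordZero (R : Type*) [CommRing R] (n m : ℕ) : Submodule R (Fin n → R) where
  carrier := {v | ∀ j : Fin n, (j : ℕ) < m → v j = 0}
  add_mem' := by
    intro x y hx hy j hj
    have h1 := hx j hj
    have h2 := hy j hj
    simp [Pi.add_apply, h1, h2]
  zero_mem' := by intro j hj; rfl
  smul_mem' := by
    intro c x hx j hj
    have h1 := hx j hj
    simp [Pi.smul_apply, h1]

/-- The standard basis vector `a_{i+1}` (`i` is 0-indexed). -/
def stdA (R : Type*) [CommRing R] (g i : ℕ) : Fin (2 * g) → R :=
  fun j => if (j : ℕ) = 2 * i then 1 else 0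

/-- The standard basis vector `b_{i+1}` (`i` is 0-indexed). -/
def stdB (R : Type*) [CommRing R] (g i : ℕ) : Fin (2 * g) → R :=
  fun j => if (j : ℕ) = 2 * i + 1 then 1 else 0

/-- Regard an integer vector as a rational vector. -/
def qcast {n : ℕ} (v : Fin n → ℤ) : Fin n → ℚ := fun j => (v j : ℚ)

/-- The projection `pr₂` deleting the `a_1`- and `b_1`-coordinates. -/
def pr2 {R : Type*} [CommRing R] {n : ℕ} (v : Fin n → R) : Fin n → R :=
  fun j => if (j : ℕ) < 2 then 0 else v j

/-- `gcd(v_1, …, v_m) = 1`: the vectors are linearly independent and their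
ℤ-span is a direct summand. -/
def IsUnimodular {n m : ℕ} (v : Fin m → Fin n → ℤ) : Prop :=
  LinearIndependent ℤ v ∧
    ∃ C : Submodule ℤ (Fin n → ℤ), IsCompl (Submodule.span ℤ (Set.range v)) C

/-- A primitive vector. -/
def Primitive {n : ℕ} (v : Fin n → ℤ) : Prop := IsUnimodular ![v]

/-- The entries of `w` are pairwise `ω`-orthogonal. -/
def PairwiseOrth {g m : ℕ} (w : Fin m → Fin (2 * g) → ℤ) : Prop :=
  ∀ i j, i ≠ j → symp (w i) (w j) = 0

/-- `Λ³ W`: the span of all wedges of three vectors from `W` inside the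
exterior algebra. -/
def wedge3 {g : ℕ} (W : Submodule ℚ (Fin (2 * g) → ℚ)) :
    Submodule ℚ (ExteriorAlgebra ℚ (Fin (2 * g) → ℚ)) :=
  Submodule.span ℚ {x | ∃ z₁ ∈ W, ∃ z₂ ∈ W, ∃ z₃ ∈ W,
    x = ExteriorAlgebra.ι ℚ z₁ * ExteriorAlgebra.ι ℚ z₂ * ExteriorAlgebra.ι ℚ z₃}

/-- `u ∧ Λ² W`. -/
def uWedge2 {g : ℕ} (u : Fin (2 * g) → ℚ) (W : Submodule ℚ (Fin (2 * g) → ℚ)) :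
    Submodule ℚ (ExteriorAlgebra ℚ (Fin (2 * g) → ℚ)) :=
  Submodule.span ℚ {x | ∃ z₁ ∈ W, ∃ z₂ ∈ W,
    x = ExteriorAlgebra.ι ℚ u * ExteriorAlgebra.ι ℚ z₁ * ExteriorAlgebra.ι ℚ z₂}

/-- `u ∧ u' ∧ W`. -/
def uuWedge1 {g : ℕ} (u u' : Fin (2 * g) → ℚ) (W : Submodule ℚ (Fin (2 * g) → ℚ)) :
    Submodule ℚ (ExteriorAlgebra ℚ (Fin (2 * g) → ℚ)) :=
  Submodule.span ℚ {x | ∃ z ∈ W,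
    x = ExteriorAlgebra.ι ℚ u * ExteriorAlgebra.ι ℚ u' * ExteriorAlgebra.ι ℚ z}

/-- The simplicial differential: on the summand indexed by `w` it sends `z` to
`Σ_j (-1)^j · z` placed in the summand indexed by `∂_j w`. -/
noncomputable def diff (g p : ℕ)
    (ξ : (Fin (p + 1) → Fin (2 * g) → ℤ) →₀ ExteriorAlgebra ℚ (Fin (2 * g) → ℚ)) :
    (Fin p → Fin (2 * g) → ℤ) →₀ ExteriorAlgebra ℚ (Fin (2 * g) → ℚ) :=
  ξ.sum fun w z =>
    ∑ j : Fin (p + 1), ((-1 : ℚ) ^ (j : ℕ)) • Finsupp.single (fun i => w (j.succAbove i)) z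

/-- The gcd of the determinants of all maximal square submatrices of the matrix
whose columns are the `v i`. -/
def vgcd {ι : Type*} [Fintype ι] {m : ℕ} (v : Fin m → ι → ℤ) : ℕ :=
  Finset.univ.gcd fun r : Fin m → ι => (Matrix.det (Matrix.of fun i j => v j (r i))).natAbs

/-! A family of integer vectors is unimodular exactly when it admits a dual family of functionals,
and two such families can be concatenated as soon as the functionals of one block vanish on the
other block (the other block's functionals are then corrected triangularly).

The isotropic vectors `x_k, …, x_{g-2-s}` are produced one at a time: under fewer than `2g` integer
linear conditions there is a nonzero solution, hence a primitive one `u` together with a functional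
`ψ` with `ψ u = 1`; adding the two conditions `ω(u, ·) = 0` and `ψ = 0` and recursing yields the
rest. The initial `2k + 2(s + 1)` conditions are the vanishing of the first `2k` coordinates,
orthogonality to the `w_i`, and a dual family of `w` corrected to vanish on `a_1, …, a_{k-1}`;
this leaves room for exactly `g - s - k - 1` vectors. -/
open Module

section DualFamily

variable {R M ι κ : Type*} [CommRing R] [AddCommGroup M] [Module R M]

def IsDualFamily [DecidableEq ι] (φ : ι → Dual R M) (v : ι → M) : Prop :=
  ∀ i j, φ i (v j) = if i = j then 1 else 0

theorem IsDualFamily.exists_vanishing [DecidableEq ι] [DecidableEq κ] [Fintype κ]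
    {φ : ι → Dual R M} {v : ι → M} {ψ : κ → Dual R M} {u : κ → M}
    (hφ : IsDualFamily φ v) (hψ : IsDualFamily ψ u) (hψv : ∀ q i, ψ q (v i) = 0) :
    ∃ φ' : ι → Dual R M, IsDualFamily φ' v ∧ ∀ i q, φ' i (u q) = 0 := by
  refine ⟨fun i => φ i - ∑ q, φ i (u q) • ψ q, fun i j => ?_, fun i r => ?_⟩
  · simp [hφ i j, hψv]
  · simp [hψ _ r]

theorem IsDualFamily.append {m m' : ℕ} {φ : Fin m → Dual R M} {v : Fin m → M}
    {ψ : Fin m' → Dual R M} {u : Fin m' → M} (hφ : IsDualFamily φ v) (hψ : IsDualFamily ψ u)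
    (hφu : ∀ i q, φ i (u q) = 0) (hψv : ∀ q i, ψ q (v i) = 0) :
    IsDualFamily (Fin.append φ ψ) (Fin.append v u) := by
  intro i j
  induction i using Fin.addCases <;> induction j using Fin.addCases <;>
    simp [hφ _ _, hψ _ _, hφu, hψv, Fin.ext_iff] <;> omega

end DualFamily

theorem isUnimodular_iff_exists_isDualFamily {n m : ℕ} {v : Fin m → Fin n → ℤ} :
    IsUnimodular v ↔ ∃ φ : Fin m → Dual ℤ (Fin n → ℤ), IsDualFamily φ v := by
  constructor
  · rintro ⟨hli, C, hC⟩
    let b : Basis (Fin m) ℤ (Submodule.span ℤ (Set.range v)) := Basis.span hli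
    refine ⟨fun i => b.coord i ∘ₗ Submodule.projectionOnto _ _ hC, fun i j => ?_⟩
    have hvj : Submodule.projectionOnto _ _ hC (v j) = b j := by
      rw [Submodule.projectionOnto_apply_of_mem_left hC (Submodule.subset_span ⟨j, rfl⟩),
        Basis.span_apply]
    simp [hvj, Finsupp.single_apply, eq_comm]
  · rintro ⟨φ, hφ⟩
    refine ⟨.of_pairwise_dual_eq_zero_one v φ (fun i j hij => by simp [hφ i j, hij])
      (fun i => by simp [hφ i i]), ?_⟩
    let P : (Fin n → ℤ) →ₗ[ℤ] (Fin n → ℤ) := ∑ i, (φ i).smulRight (v i)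
    have hP : LinearMap.IsProj (Submodule.span ℤ (Set.range v)) P := by
      refine ⟨fun x => ?_, fun x hx => ?_⟩
      · simpa [P] using Submodule.sum_mem (Submodule.span ℤ (Set.range v)) fun i _ =>
          Submodule.smul_mem _ (φ i x) (Submodule.subset_span ⟨i, rfl⟩)
      · refine (Submodule.span_le (p := LinearMap.eqLocus P LinearMap.id)).2 ?_ hx
        rintro _ ⟨j, rfl⟩
        simp [P, hφ _ j]
    exact ⟨_, hP.isCompl⟩

section Append

variable {n m m' : ℕ} {v : Fin m → Fin n → ℤ} {u : Fin m' → Fin n → ℤ}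

theorem isUnimodular_append_of_left {φ : Fin m → Dual ℤ (Fin n → ℤ)} (hφ : IsDualFamily φ v)
    (hφu : ∀ i q, φ i (u q) = 0) (hu : IsUnimodular u) : IsUnimodular (Fin.append v u) := by
  obtain ⟨ψ, hψ⟩ := isUnimodular_iff_exists_isDualFamily.1 hu
  obtain ⟨ψ', hψ', hψ'v⟩ := hψ.exists_vanishing hφ hφu
  exact isUnimodular_iff_exists_isDualFamily.2 ⟨_, hφ.append hψ' hφu hψ'v⟩

theorem isUnimodular_append_of_right {ψ : Fin m' → Dual ℤ (Fin n → ℤ)} (hv : IsUnimodular v)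
    (hψ : IsDualFamily ψ u) (hψv : ∀ q i, ψ q (v i) = 0) : IsUnimodular (Fin.append v u) := by
  obtain ⟨φ, hφ⟩ := isUnimodular_iff_exists_isDualFamily.1 hv
  obtain ⟨φ', hφ', hφ'u⟩ := hφ.exists_vanishing hψ hψv
  exact isUnimodular_iff_exists_isDualFamily.2 ⟨_, hφ'.append hψ hφ'u hψv⟩

end Append

section Symplectic

variable {R : Type*} [CommRing R] {g : ℕ}

theorem symp_add_right (a x y : Fin (2 * g) → R) : symp a (x + y) = symp a x + symp a y := by
  simp only [symp, ← Finset.sum_add_distrib, Pi.add_apply]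
  exact Finset.sum_congr rfl fun i _ => by ring

theorem symp_smul_right (c : R) (a x : Fin (2 * g) → R) : symp a (c • x) = c * symp a x := by
  simp only [symp, Finset.mul_sum, Pi.smul_apply, smul_eq_mul]
  exact Finset.sum_congr rfl fun i _ => by ring

theorem symp_anticomm (x y : Fin (2 * g) → R) : symp x y = -symp y x := by
  simp only [symp, ← Finset.sum_neg_distrib]
  exact Finset.sum_congr rfl fun i _ => by ring

theorem symp_self (x : Fin (2 * g) → R) : symp x x = 0 :=
  Finset.sum_eq_zero fun i _ => by ring

def sympL (a : Fin (2 * g) → R) : Dual R (Fin (2 * g) → R) where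
  toFun := symp a
  map_add' := symp_add_right a
  map_smul' c := symp_smul_right c a

@[simp] theorem sympL_apply (a x : Fin (2 * g) → R) : sympL a x = symp a x := rfl

theorem pairwiseOrth_append {m m' : ℕ} {v : Fin m → Fin (2 * g) → ℤ}
    {u : Fin m' → Fin (2 * g) → ℤ} (hv : PairwiseOrth v) (hu : PairwiseOrth u)
    (hvu : ∀ i j, symp (v i) (u j) = 0) : PairwiseOrth (Fin.append v u) := by
  intro i j hij
  induction i using Fin.addCases <;> induction j using Fin.addCases
  · simp only [Fin.append_left]; exact hv _ _ fun h => hij (h ▸ rfl)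
  · simp only [Fin.append_left, Fin.append_right, hvu]
  · simp only [Fin.append_left, Fin.append_right]; rw [symp_anticomm, hvu, neg_zero]
  · simp only [Fin.append_right]; exact hu _ _ fun h => hij (h ▸ rfl)

theorem symp_stdA_left {l : ℕ} (hl : l < g) (x : Fin (2 * g) → R) :
    symp (stdA R g l) x = x ⟨2 * l + 1, by omega⟩ := by
  rw [symp, Finset.sum_eq_single ⟨l, hl⟩ (fun i _ hi => ?_) (by simp)]
  · simp [stdA]
  · have : (i : ℕ) ≠ l := fun h => hi (Fin.ext h)
    simp [stdA, show 2 * (i : ℕ) ≠ 2 * l by omega, show 2 * (i : ℕ) + 1 ≠ 2 * l by omega]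

theorem symp_stdA_eq_zero {l m : ℕ} (hl : l < m) (hm : m ≤ g) {y : Fin (2 * g) → R}
    (hy : y ∈ coordZero R (2 * g) (2 * m)) : symp (stdA R g l) y = 0 := by
  rw [symp_stdA_left (by omega)]
  exact hy _ (by simp; omega)

theorem pairwiseOrth_stdA {m : ℕ} (hm : m ≤ g) : PairwiseOrth fun l : Fin m => stdA ℤ g l := by
  intro l l' _
  rw [symp_stdA_left (by omega)]
  simp [stdA]
  omega

theorem isDualFamily_stdA {m : ℕ} (hm : m ≤ g) :
    IsDualFamily (fun l : Fin m => LinearMap.proj (R := ℤ) (φ := fun _ => ℤ)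
      (⟨2 * l, by omega⟩ : Fin (2 * g))) fun l => stdA ℤ g l := by
  intro l l'
  simp [stdA, Fin.ext_iff]

end Symplectic

theorem exists_ne_zero_forall_eq_zero {n : ℕ} {ι : Type*} [Fintype ι]
    (f : ι → Dual ℤ (Fin n → ℤ)) (h : Fintype.card ι < n) : ∃ z ≠ 0, ∀ i, f i z = 0 := by
  by_contra! hf
  have hinj : Function.Injective (LinearMap.pi f) := by
    rw [← LinearMap.ker_eq_bot, Submodule.eq_bot_iff]
    intro z hz
    by_contra hz0
    obtain ⟨i, hi⟩ := hf z hz0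
    exact hi (congrFun hz i)
  have := LinearMap.finrank_le_finrank_of_injective hinj
  simp at this
  omega

theorem exists_eq_smul_dual_eq_one {n : ℕ} {z : Fin n → ℤ} (hz : z ≠ 0) :
    ∃ (d : ℤ) (u : Fin n → ℤ) (ψ : Dual ℤ (Fin n → ℤ)), d ≠ 0 ∧ z = d • u ∧ ψ u = 1 := by
  have hne : (Finset.univ : Finset (Fin n)).Nonempty := by
    by_contra h
    exact hz (funext fun j => absurd ⟨j, Finset.mem_univ j⟩ h)
  obtain ⟨u, hzu, hu⟩ := Finset.extract_gcd z hne
  obtain ⟨c, hc⟩ := Finset.gcd_eq_sum_mul Finset.univ u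
  refine ⟨Finset.univ.gcd z, u, ∑ j, c j • LinearMap.proj j, ?_, ?_, ?_⟩
  · rw [Ne, Finset.gcd_eq_zero_iff]
    exact fun h => hz (funext fun j => h j (Finset.mem_univ j))
  · exact funext fun j => hzu j (Finset.mem_univ j)
  · simp [← hc, hu, mul_comm]

theorem exists_forall_eq_zero_dual_eq_one {n : ℕ} {ι : Type*} [Fintype ι]
    (f : ι → Dual ℤ (Fin n → ℤ)) (h : Fintype.card ι < n) :
    ∃ (u : Fin n → ℤ) (ψ : Dual ℤ (Fin n → ℤ)), (∀ i, f i u = 0) ∧ ψ u = 1 := by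
  obtain ⟨z, hz, hfz⟩ := exists_ne_zero_forall_eq_zero f h
  obtain ⟨d, u, ψ, hd, rfl, hψ⟩ := exists_eq_smul_dual_eq_one hz
  refine ⟨u, ψ, fun i => ?_, hψ⟩
  have := hfz i
  rw [map_smul, smul_eq_mul, mul_eq_zero] at this
  exact this.resolve_left hd

theorem exists_isUnimodular_pairwiseOrth {g : ℕ} (t : ℕ) {ι : Type*} [Fintype ι]
    (f : ι → Dual ℤ (Fin (2 * g) → ℤ)) (h : Fintype.card ι + 2 * t ≤ 2 * g) :
    ∃ x : Fin t → Fin (2 * g) → ℤ, IsUnimodular x ∧ (∀ i q, f i (x q) = 0) ∧ PairwiseOrth x := by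
  induction t generalizing ι with
  | zero =>
    exact ⟨Fin.elim0, isUnimodular_iff_exists_isDualFamily.2 ⟨Fin.elim0, fun i => i.elim0⟩,
      fun _ q => q.elim0, fun q => q.elim0⟩
  | succ t ih =>
    obtain ⟨u, ψ, hfu, hψu⟩ := exists_forall_eq_zero_dual_eq_one f (by omega)
    obtain ⟨x, hx, hfx, hxx⟩ := ih (Sum.elim f ![sympL u, ψ]) (by simp; omega)
    refine ⟨Fin.append x ![u], isUnimodular_append_of_right hx (ψ := ![ψ]) ?_ ?_, ?_, ?_⟩
    · intro i j
      simp [Subsingleton.elim i j, hψu]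
    · intro _ q
      simpa using hfx (Sum.inr 1) q
    · intro i q
      induction q using Fin.addCases
      · simpa using hfx (Sum.inl i) _
      · simpa using hfu i
    · refine pairwiseOrth_append hxx (fun i j hij => absurd (Subsingleton.elim i j) hij)
        fun q _ => ?_
      rw [symp_anticomm]
      simpa using hfx (Sum.inr 0) q

theorem stmt13_general (g k s : ℕ) (hk1 : 1 ≤ k) (hs : s + k + 1 ≤ g)
    (w : Fin (s + 1) → Fin (2 * g) → ℤ)
    (hwH : ∀ i, w i ∈ coordZero ℤ (2 * g) (2 * (k - 1)))
    (horth : ∀ i j, i ≠ j → symp (w i) (w j) = 0)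
    (hgcd : IsUnimodular w) :
    ∃ x : Fin (g - 2 - s) → Fin (2 * g) → ℤ,
      (∀ j : Fin (g - 2 - s), (j : ℕ) < k - 1 → x j = stdA ℤ g (j : ℕ)) ∧
      (∀ j : Fin (g - 2 - s), k - 1 ≤ (j : ℕ) → x j ∈ coordZero ℤ (2 * g) (2 * k)) ∧
      (∀ i j, i ≠ j → symp (Fin.append w x i) (Fin.append w x j) = 0) ∧
      IsUnimodular (Fin.append w x) := by
  have ha := isDualFamily_stdA (m := k - 1) (g := g) (by omega)
  obtain ⟨φ, hφ⟩ := isUnimodular_iff_exists_isDualFamily.1 hgcd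
  obtain ⟨φ', hφ', hφ'a⟩ := hφ.exists_vanishing ha fun l i => hwH i _ (by simp)
  obtain ⟨x, hx, hfx, hxx⟩ := exists_isUnimodular_pairwiseOrth (g - s - k - 1)
    (Sum.elim (fun j : Fin (2 * k) => LinearMap.proj (R := ℤ) (φ := fun _ => ℤ)
      (⟨j, by omega⟩ : Fin (2 * g))) (Sum.elim (fun i => sympL (w i)) φ')) (by simp; omega)
  have hxH : ∀ q, x q ∈ coordZero ℤ (2 * g) (2 * k) := fun q j hj =>
    by simpa using hfx (Sum.inl ⟨j, hj⟩) q
  have hxH' : ∀ q, x q ∈ coordZero ℤ (2 * g) (2 * (k - 1)) := fun q j hj => hxH q j (by omega)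
  rw [show g - 2 - s = (k - 1) + (g - s - k - 1) by omega]
  refine ⟨Fin.append (fun l => stdA ℤ g l) x, fun j hj => ?_, fun j hj => ?_, ?_, ?_⟩
  · induction j using Fin.addCases with
    | left l => simp
    | right q => simp at hj
  · induction j using Fin.addCases with
    | left l => simp at hj; omega
    | right q => simpa using hxH q
  · refine pairwiseOrth_append horth (pairwiseOrth_append (pairwiseOrth_stdA (by omega)) hxx
      fun l q => symp_stdA_eq_zero l.2 (by omega) (hxH' q)) fun i j => ?_
    induction j using Fin.addCases with
    | left l => rw [Fin.append_left, symp_anticomm, symp_stdA_eq_zero l.2 (by omega) (hwH i),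
        neg_zero]
    | right q => simpa using hfx (Sum.inr (Sum.inl i)) q
  · refine isUnimodular_append_of_left hφ' (fun i j => ?_)
      (isUnimodular_append_of_left ha (fun l q => hxH' q _ (by simp)) hx)
    induction j using Fin.addCases with
    | left l => simpa using hφ'a i l
    | right q => simpa using hfx (Sum.inr (Sum.inr i)) q

/-- Lemma 3.11 for `i = 1` — extending an isotropic unimodular
family in `H_k` by standard-like vectors in higher filtration. -/
theorem stmt13 (g k s : ℕ) (hk1 : 1 ≤ k) (hk5 : k ≤ 5) (hs : s + k + 1 ≤ g)
    (w : Fin (s + 1) → Fin (2 * g) → ℤ)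
    (hwH : ∀ i, w i ∈ coordZero ℤ (2 * g) (2 * (k - 1)))
    (horth : ∀ i j, i ≠ j → symp (w i) (w j) = 0)
    (hgcd : IsUnimodular w) :
    ∃ x : Fin (g - 2 - s) → Fin (2 * g) → ℤ,
      (∀ j : Fin (g - 2 - s), (j : ℕ) < k - 1 → x j = stdA ℤ g (j : ℕ)) ∧
      (∀ j : Fin (g - 2 - s), k - 1 ≤ (j : ℕ) → x j ∈ coordZero ℤ (2 * g) (2 * k)) ∧
      (∀ i j, i ≠ j → symp (Fin.append w x i) (Fin.append w x j) = 0) ∧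
      IsUnimodular (Fin.append w x) :=
  stmt13_general g k s hk1 hs w hwH horth hgcd

end Paper
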